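/- In ℚ⟦t⟧, the formal power series g := Σ_{n≥1} (−1)^{n−1} (n^{n−1}/n!) t^n is the compositional inverse of t·e^t; that is, substituting g into the series t·exp(t) = Σ_{n≥0} t^{n+1}/n! yields t. Equivalently, g · exp(g) = t, where exp(g) denotes the substitution of g (which has zero constant coefficient) into the exponential power series Σ_{n≥0} t^n/n!. -/

import Mathlib

/-!
Write `F = t·eᵗ` and `W = lambertW`. Since `coeff n (Fᵐ) = m^(n-m)/(n-m)!`, the `n`-th coefficient
of `W ∘ F` is, for `n ≥ 2`, `-(1/n!) ∑ₘ (-1)ᵐ (n choose m) m^(n-1)`: up to sign the `n`-th forward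
difference of a polynomial of degree `n - 1`, hence zero. So `W ∘ F = t`. On series without
constant term, `psComp` is Mathlib's `PowerSeries.subst`, hence associative and multiplicative,
and composition with `W` is injective because `W` has nonzero linear coefficient. Then
`W ∘ (F ∘ W) = (W ∘ F) ∘ W = W = W ∘ t` gives `F ∘ W = t`, and `W · exp(W) = (t · exp) ∘ W = t`.
-/

open scoped Nat

open PowerSeries Finset

/-- Composition (substitution) of formal power series: `psComp f g` is the
series obtained by substituting `g` into `f`, defined coefficientwise by
`coeff n (f ∘ g) = ∑_{m ≤ n} f_m · coeff n (gᵐ)`. When `g` has zero constant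
coefficient this is the usual substitution. -/
noncomputable def psComp {K : Type*} [CommRing K] (f g : PowerSeries K) :
    PowerSeries K :=
  PowerSeries.mk fun n : ℕ =>
    ∑ m ∈ Finset.range (n + 1),
      PowerSeries.coeff m f * PowerSeries.coeff n (g ^ m)

/-- The series `g = ∑_{n ≥ 1} (−1)^{n−1} (n^{n−1}/n!) tⁿ ∈ ℚ⟦t⟧` defining
Lambert's W-function. -/
noncomputable def lambertW : PowerSeries ℚ :=
  PowerSeries.mk fun n : ℕ =>
    if n = 0 then 0 else (-1 : ℚ) ^ (n - 1) * (n : ℚ) ^ (n - 1) / n !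

theorem sum_range_neg_one_pow_mul_choose_mul_pow_eq_zero {R : Type*} [CommRing R] {p n : ℕ}
    (h : p < n) : ∑ k ∈ range (n + 1), (-1 : R) ^ k * n.choose k * (k : R) ^ p = 0 := by
  have hΔ := congr_fun (fwdDiff_iter_pow_eq_zero_of_lt (R := R) h) 0
  rw [fwdDiff_iter_eq_sum_shift] at hΔ
  simp only [zero_add, nsmul_eq_mul, mul_one, zsmul_eq_mul, Int.cast_mul, Int.cast_pow,
    Int.cast_neg, Int.cast_one, Int.cast_natCast, Pi.zero_apply] at hΔ
  have hsign : ∀ k ≤ n, (-1 : R) ^ k = (-1) ^ n * (-1) ^ (n - k) := fun k hk => by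
    rw [← pow_add, show n + (n - k) = k + 2 * (n - k) by omega, pow_add, pow_mul, neg_one_sq,
      one_pow, mul_one]
  calc ∑ k ∈ range (n + 1), (-1 : R) ^ k * n.choose k * (k : R) ^ p
      = (-1) ^ n * ∑ k ∈ range (n + 1), (-1 : R) ^ (n - k) * n.choose k * (k : R) ^ p := by
        rw [mul_sum]
        refine sum_congr rfl fun k hk => ?_
        rw [hsign k (Nat.lt_succ_iff.mp (mem_range.mp hk))]
        ring
    _ = 0 := by rw [hΔ, mul_zero]

theorem dvd_pow_sub_pow_of_dvd_sub {R : Type*} [CommRing R] {x a b : R} {n m : ℕ}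
    (ha : x ∣ a) (hb : x ∣ b) (hab : x ^ n ∣ a - b) (hm : 2 ≤ m) :
    x ^ (n + 1) ∣ a ^ m - b ^ m := by
  rw [← geom_sum₂_mul, pow_succ']
  refine mul_dvd_mul (Finset.dvd_sum fun i hi => ?_) hab
  rcases Nat.eq_zero_or_pos i with rfl | hi0
  · exact (dvd_pow hb (by omega)).mul_left _
  · exact (dvd_pow ha hi0.ne').mul_right _

section psComp

variable {K : Type*} [CommRing K] {g : PowerSeries K}

theorem coeff_pow_eq_zero_of_lt (hg : constantCoeff g = 0) {n m : ℕ} (h : n < m) :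
    coeff n (g ^ m) = 0 :=
  X_pow_dvd_iff.mp (pow_dvd_pow_of_dvd (X_dvd_iff.mpr hg) m) n h

theorem coeff_psComp (f g : PowerSeries K) (n : ℕ) :
    coeff n (psComp f g) = ∑ m ∈ range (n + 1), coeff m f * coeff n (g ^ m) :=
  coeff_mk _ _

theorem psComp_eq_subst (hg : constantCoeff g = 0) (f : PowerSeries K) :
    psComp f g = f.subst g := by
  ext n
  rw [coeff_subst' (HasSubst.of_constantCoeff_zero' hg),
    finsum_eq_sum_of_support_subset (s := range (n + 1)), coeff_psComp]
  · rfl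
  · intro m hm
    rw [Function.mem_support] at hm
    rw [coe_range, Set.mem_Iio]
    by_contra! hnm
    exact hm (by rw [coeff_pow_eq_zero_of_lt hg (by omega), smul_zero])

theorem constantCoeff_psComp (f g : PowerSeries K) :
    constantCoeff (psComp f g) = constantCoeff f := by
  rw [← coeff_zero_eq_constantCoeff_apply, coeff_psComp]
  simp

theorem psComp_mul (hg : constantCoeff g = 0) (a b : PowerSeries K) :
    psComp (a * b) g = psComp a g * psComp b g := by
  simp only [psComp_eq_subst hg, subst_mul (HasSubst.of_constantCoeff_zero' hg)]

theorem psComp_X (hg : constantCoeff g = 0) : psComp X g = g := by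
  rw [psComp_eq_subst hg, subst_X (HasSubst.of_constantCoeff_zero' hg)]

theorem psComp_X_right (f : PowerSeries K) : psComp f X = f := by
  rw [psComp_eq_subst constantCoeff_X, X_subst]

theorem psComp_psComp {h : PowerSeries K} (hg : constantCoeff g = 0)
    (hh : constantCoeff h = 0) (f : PowerSeries K) :
    psComp (psComp f g) h = psComp f (psComp g h) := by
  have hgh : constantCoeff (psComp g h) = 0 := by rw [constantCoeff_psComp, hg]
  rw [psComp_eq_subst hgh, psComp_eq_subst hg, psComp_eq_subst hh, psComp_eq_subst hh,
    subst_comp_subst_apply (HasSubst.of_constantCoeff_zero' hg)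
      (HasSubst.of_constantCoeff_zero' hh)]

theorem psComp_left_injective [NoZeroDivisors K] (hg : coeff 1 g ≠ 0) {a b : PowerSeries K}
    (ha : constantCoeff a = 0) (hb : constantCoeff b = 0) (h : psComp g a = psComp g b) :
    a = b := by
  ext n
  induction n using Nat.strong_induction_on with
  | _ n ih =>
    rcases n with _ | n
    · simp [ha, hb]
    have hdvd : X ^ (n + 1) ∣ a - b := X_pow_dvd_iff.mpr fun k hk => by
      rw [map_sub, ih k hk, sub_self]
    have hpow : ∀ m ∈ range (n + 2), m ≠ 1 →
        coeff m g * (coeff (n + 1) (a ^ m) - coeff (n + 1) (b ^ m)) = 0 := by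
      intro m _ hm1
      rcases m with _ | _ | m
      · simp
      · exact absurd rfl hm1
      · rw [← map_sub, X_pow_dvd_iff.mp (dvd_pow_sub_pow_of_dvd_sub (X_dvd_iff.mpr ha)
          (X_dvd_iff.mpr hb) hdvd (by omega)) (n + 1) (by omega), mul_zero]
    have hcoeff := congr_arg (coeff (n + 1)) h
    rw [coeff_psComp, coeff_psComp, ← sub_eq_zero, ← sum_sub_distrib] at hcoeff
    simp only [← mul_sub] at hcoeff
    rw [sum_eq_single_of_mem 1 (by simp) hpow, pow_one, pow_one, mul_eq_zero] at hcoeff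
    exact sub_eq_zero.mp (hcoeff.resolve_left hg)

end psComp

theorem coeff_lambertW (n : ℕ) :
    coeff n lambertW = if n = 0 then 0 else (-1 : ℚ) ^ (n - 1) * (n : ℚ) ^ (n - 1) / n ! :=
  coeff_mk _ _

theorem constantCoeff_lambertW : constantCoeff lambertW = 0 := by
  rw [← coeff_zero_eq_constantCoeff_apply, coeff_lambertW, if_pos rfl]

theorem coeff_X_mul_exp_pow {n m : ℕ} (h : m ≤ n) :
    coeff n ((X * exp ℚ) ^ m) = (m : ℚ) ^ (n - m) / (n - m)! := by
  obtain ⟨k, rfl⟩ := Nat.exists_eq_add_of_le h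
  rw [mul_pow, coeff_X_pow_mul', if_pos (by omega), exp_pow_eq_rescale_exp, coeff_rescale,
    coeff_exp, Nat.add_sub_cancel_left]
  simp [div_eq_mul_inv]

theorem coeff_lambertW_mul_coeff_X_mul_exp_pow {n m : ℕ} (hn : 2 ≤ n) (hm : m ≤ n) :
    coeff m lambertW * coeff n ((X * exp ℚ) ^ m)
      = -((-1) ^ m * n.choose m * (m : ℚ) ^ (n - 1)) / n ! := by
  rcases m with _ | m
  · simp [coeff_lambertW, zero_pow (show n - 1 ≠ 0 by omega)]
  obtain ⟨k, rfl⟩ := Nat.exists_eq_add_of_le hm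
  rw [coeff_lambertW, if_neg m.succ_ne_zero, coeff_X_mul_exp_pow hm, Nat.add_sub_cancel_left,
    Nat.cast_choose ℚ hm, Nat.add_sub_cancel_left, Nat.add_sub_cancel,
    show m + 1 + k - 1 = m + k by omega, pow_add _ m k]
  field_simp
  ring

theorem psComp_lambertW_X_mul_exp : psComp lambertW (X * exp ℚ) = X := by
  ext n
  rw [coeff_psComp, coeff_X]
  rcases n with _ | _ | n
  · simp [coeff_lambertW]
  · simp [sum_range_succ, coeff_lambertW]
  · rw [if_neg (by omega), sum_congr rfl fun m hm => coeff_lambertW_mul_coeff_X_mul_exp_pow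
      (by omega) (Nat.lt_succ_iff.mp (mem_range.mp hm)), ← sum_div, sum_neg_distrib,
      sum_range_neg_one_pow_mul_choose_mul_pow_eq_zero (by omega), neg_zero, zero_div]

/-- `lambertW` is the compositional inverse of `t·eᵗ`: substituting it into
`t·exp(t)` yields `t`; equivalently `g·exp(g) = t`, where `exp(g)` is the
substitution of `g` into the exponential series `∑ tⁿ/n!`. -/
theorem lambertW_comp_mul_exp :
    psComp (PowerSeries.X * PowerSeries.exp ℚ) lambertW = PowerSeries.X ∧
    lambertW * psComp (PowerSeries.exp ℚ) lambertW = PowerSeries.X := by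
  have hF : constantCoeff (X * exp ℚ) = 0 := by simp
  have hW := constantCoeff_lambertW
  have hright : psComp (X * exp ℚ) lambertW = X := by
    refine psComp_left_injective (g := lambertW) (by simp [coeff_lambertW])
      (by rw [constantCoeff_psComp, hF]) constantCoeff_X ?_
    rw [← psComp_psComp hF hW, psComp_lambertW_X_mul_exp, psComp_X hW, psComp_X_right]
  refine ⟨hright, ?_⟩
  rw [← hright, psComp_mul hW, psComp_X hW]
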